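/- arXiv:2010.11456 — 5 statements merged into one kernel-verified Lean document; each statement's English description precedes it below -/
import Mathlib

section
/- Let n ≥ 1 and let A ∈ ℝ^{n×n} be a Monge matrix. Then the identity permutation minimizes the assignment cost: for every permutation σ of {1,…,n}, ∑_{i=1}^{n} A_{i,i} ≤ ∑_{i=1}^{n} A_{i,σ(i)}. -/
/-!
Let `i` be the least point moved by `σ`. Since `σ` fixes everything below `i`, both `σ i` and
`σ⁻¹ i` lie above `i`, so the rows `i < σ⁻¹ i` are matched to the columns `σ i > i` in the wrong
order. Exchanging them is a Monge move, which does not increase the cost, and it fixes `i`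
without moving anything new. Induction on the number of moved points ends at the identity.
-/

open Finset Equiv Equiv.Perm

variable {ι : Type*} [LinearOrder ι]

theorem Equiv.Perm.lt_apply_of_forall_lt_apply_eq {σ : Perm ι} {i : ι}
    (hfix : ∀ y < i, σ y = y) (hi : σ i ≠ i) : i < σ i := by
  by_contra! h
  exact hi (σ.injective (hfix _ (h.lt_of_ne hi)))

variable [Fintype ι] {M : Type*} [AddCommGroup M] [PartialOrder M] [IsOrderedAddMonoid M]

def IsMonge (A : ι → ι → M) : Prop :=
  ∀ i k j l, i < k → j < l → A i j + A k l ≤ A i l + A k j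

def assignmentCost (A : ι → ι → M) (σ : Perm ι) : M :=
  ∑ i, A i (σ i)

theorem assignmentCost_mul_swap_le {A : ι → ι → M} (hA : IsMonge A) {σ : Perm ι} {i k : ι}
    (hik : i < k) (hσ : σ k < σ i) :
    assignmentCost A (σ * swap i k) ≤ assignmentCost A σ := by
  have hdiff : assignmentCost A (σ * swap i k) - assignmentCost A σ =
      (A i (σ k) - A i (σ i)) + (A k (σ i) - A k (σ k)) := by
    rw [assignmentCost, assignmentCost, ← sum_sub_distrib,
      Fintype.sum_eq_add i k hik.ne fun x hx => by simp [swap_apply_of_ne_of_ne hx.1 hx.2]]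
    simp
  have hmonge := hA i k (σ k) (σ i) hik hσ
  rw [← sub_nonpos, hdiff]
  calc (A i (σ k) - A i (σ i)) + (A k (σ i) - A k (σ k))
      = (A i (σ k) + A k (σ i)) - (A i (σ i) + A k (σ k)) := by abel
    _ ≤ 0 := sub_nonpos.mpr hmonge

theorem assignmentCost_one_le {A : ι → ι → M} (hA : IsMonge A) (σ : Perm ι) :
    assignmentCost A 1 ≤ assignmentCost A σ := by
  rcases σ.support.eq_empty_or_nonempty with h | h
  · rw [support_eq_empty_iff.mp h]
  set i := σ.support.min' h
  have hfix : ∀ y < i, σ y = y := fun y hy =>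
    notMem_support.mp fun hy' => (min'_le _ _ hy').not_gt hy
  have hi : σ i ≠ i := mem_support.mp (min'_mem _ h)
  have hlt : i < σ i := lt_apply_of_forall_lt_apply_eq hfix hi
  have hlt_inv : i < σ⁻¹ i := lt_apply_of_forall_lt_apply_eq
    (fun y hy => inv_eq_iff_eq.mpr (hfix y hy).symm) (fun h' => hi (inv_eq_iff_eq.mp h').symm)
  have hσinv : σ (σ⁻¹ i) = i := σ.apply_symm_apply i
  have hswap : swap i (σ i) * σ = σ * swap i (σ⁻¹ i) := by
    rw [mul_swap_eq_swap_mul, hσinv, swap_comm]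
  calc assignmentCost A 1 ≤ assignmentCost A (swap i (σ i) * σ) := assignmentCost_one_le hA _
    _ ≤ assignmentCost A σ := by
      rw [hswap]
      exact assignmentCost_mul_swap_le hA hlt_inv (by rwa [hσinv])
termination_by σ.support.card
decreasing_by exact card_support_swap_mul hi

theorem monge_identity_optimal_general (n : ℕ) (A : Fin n → Fin n → ℝ)
    (hA : ∀ i k j l : Fin n, i < k → j < l → A i j + A k l ≤ A i l + A k j)
    (σ : Equiv.Perm (Fin n)) :
    ∑ i, A i i ≤ ∑ i, A i (σ i) :=
  assignmentCost_one_le hA σ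

/-- **Monge matrices: the identity permutation is an optimal assignment.**
If `A` is an `n × n` Monge matrix (`A i j + A k l ≤ A i l + A k j` for `i < k`, `j < l`),
then the diagonal assignment has cost at most that of any permutation. -/
theorem monge_identity_optimal (n : ℕ) (hn : 1 ≤ n) (A : Fin n → Fin n → ℝ)
    (hA : ∀ i k j l : Fin n, i < k → j < l → A i j + A k l ≤ A i l + A k j)
    (σ : Equiv.Perm (Fin n)) :
    ∑ i, A i i ≤ ∑ i, A i (σ i) :=
  monge_identity_optimal_general n A hA σ
end

section
/- Let n ≥ 1 and let B ∈ ℝ^{n×n} be an Anti-Monge matrix. Then the anti-diagonal permutation rev given by rev(i) = n+1−i minimizes the assignment cost: for every permutation σ of {1,…,n}, ∑_{i=1}^{n} B_{i,n+1−i} ≤ ∑_{i=1}^{n} B_{i,σ(i)}. -/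
/-!
Swapping the images of `a < b` when `σ a < σ b` does not increase the cost of an Anti-Monge
matrix, and strictly decreases `∑ i, i * σ i`. Repeating such swaps therefore terminates, at a
permutation without such a pair, i.e. a strictly decreasing one, which can only be `Fin.rev`.
-/

open Finset Equiv

theorem Equiv.Perm.sum_mul_swap_add {ι M : Type*} [Fintype ι] [DecidableEq ι] [AddCommMonoid M]
    (f : ι → ι → M) (σ : Perm ι) {a b : ι} (hab : a ≠ b) :
    ∑ i, f i ((σ * swap a b) i) + (f a (σ a) + f b (σ b)) =
      ∑ i, f i (σ i) + (f a (σ b) + f b (σ a)) := by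
  have hfix : ∀ i ∈ ({a, b} : Finset ι)ᶜ, (σ * swap a b) i = σ i := fun i hi => by
    simp only [mem_compl, mem_insert, mem_singleton, not_or] at hi
    simp [swap_apply_of_ne_of_ne hi.1 hi.2]
  rw [← sum_add_sum_compl {a, b}, ← sum_add_sum_compl {a, b} fun i => f i (σ i),
    sum_congr rfl fun i hi => congrArg (f i) (hfix i hi), sum_pair hab, sum_pair hab]
  simp only [Perm.mul_apply, swap_apply_left, swap_apply_right]
  abel

theorem Fin.eq_rev_of_strictAnti {n : ℕ} {σ : Perm (Fin n)} (hσ : StrictAnti σ) (i : Fin n) :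
    σ i = i.rev := by
  have hmono : StrictMono (σ ∘ Fin.rev) := hσ.comp Fin.rev_strictAnti
  have hsurj : Function.Surjective (σ ∘ Fin.rev) := σ.surjective.comp Fin.rev_surjective
  have hid : σ ∘ Fin.rev = id :=
    (hmono.range_inj strictMono_id).mp (by rw [hsurj.range_eq, Set.range_id])
  simpa using congrFun hid i.rev

def IsAntiMonge {ι M : Type*} [LinearOrder ι] [Add M] [LE M] (B : ι → ι → M) : Prop :=
  ∀ i k j l, i < k → j < l → B i l + B k j ≤ B i j + B k l

theorem IsAntiMonge.sum_mul_swap_le {ι M : Type*} [Fintype ι] [DecidableEq ι] [LinearOrder ι]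
    [AddCommMonoid M] [PartialOrder M] [IsOrderedCancelAddMonoid M] {B : ι → ι → M}
    (hB : IsAntiMonge B) {σ : Perm ι} {a b : ι} (hab : a < b) (hσ : σ a < σ b) :
    ∑ i, B i ((σ * swap a b) i) ≤ ∑ i, B i (σ i) := by
  have h := Perm.sum_mul_swap_add B σ hab.ne
  refine le_of_add_le_add_right (a := B a (σ a) + B b (σ b)) ?_
  rw [h]
  exact add_le_add_right (hB a b (σ a) (σ b) hab hσ) _

def Equiv.Perm.crossSum {n : ℕ} (σ : Perm (Fin n)) : ℕ := ∑ i : Fin n, (i : ℕ) * (σ i : ℕ)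

theorem Equiv.Perm.crossSum_mul_swap_lt {n : ℕ} {σ : Perm (Fin n)} {a b : Fin n} (hab : a < b)
    (hσ : σ a < σ b) : (σ * swap a b).crossSum < σ.crossSum := by
  have h := Perm.sum_mul_swap_add (fun i j : Fin n => (i : ℕ) * (j : ℕ)) σ hab.ne
  have hab' : (a : ℕ) < b := hab
  have hσ' : (σ a : ℕ) < σ b := hσ
  unfold crossSum
  nlinarith

theorem antiMonge_rev_optimal_general (n : ℕ) (B : Fin n → Fin n → ℝ)
    (hB : ∀ i k j l : Fin n, i < k → j < l → B i l + B k j ≤ B i j + B k l)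
    (σ : Equiv.Perm (Fin n)) :
    ∑ i, B i i.rev ≤ ∑ i, B i (σ i) := by
  induction h : σ.crossSum using Nat.strong_induction_on generalizing σ with
  | _ N ih =>
    by_cases hanti : StrictAnti σ
    · simp only [Fin.eq_rev_of_strictAnti hanti, le_refl]
    obtain ⟨a, b, hab, hle⟩ : ∃ a b, a < b ∧ σ a ≤ σ b := by simpa [StrictAnti] using hanti
    have hσ : σ a < σ b := hle.lt_of_ne (σ.injective.ne hab.ne)
    calc ∑ i, B i i.rev ≤ ∑ i, B i ((σ * swap a b) i) :=
          ih _ (h ▸ Perm.crossSum_mul_swap_lt hab hσ) _ rfl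
      _ ≤ ∑ i, B i (σ i) := IsAntiMonge.sum_mul_swap_le hB hab hσ

/-- **Anti-Monge matrices: the anti-diagonal permutation is an optimal assignment.**
If `B` is an `n × n` Anti-Monge matrix (`B i j + B k l ≥ B i l + B k j` for `i < k`, `j < l`),
then the anti-diagonal assignment `i ↦ n+1-i` (here `Fin.rev` in 0-based indexing)
has cost at most that of any permutation. -/
theorem antiMonge_rev_optimal (n : ℕ) (hn : 1 ≤ n) (B : Fin n → Fin n → ℝ)
    (hB : ∀ i k j l : Fin n, i < k → j < l → B i l + B k j ≤ B i j + B k l)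
    (σ : Equiv.Perm (Fin n)) :
    ∑ i, B i i.rev ≤ ∑ i, B i (σ i) :=
  antiMonge_rev_optimal_general n B hB σ
end

section
/- (Lemma: no long cycles.) Let n ≥ 1, let A ∈ ℝ^{n×n} be Monge, let B ∈ ℝ^{n×n} be Anti-Monge, and let (σ, π) be any pair of permutations of {1,…,n}. Then there exists a pair of permutations (σ', π') such that: its cost is at most that of (σ, π), i.e., ∑_i A_{i,σ'(i)} + ∑_i B_{i,π'(i)} ≤ ∑_i A_{i,σ(i)} + ∑_i B_{i,π(i)}; its number of agreements is at least that of (σ, π), i.e., |{i : σ'(i) = π'(i)}| ≥ |{i : σ(i) = π(i)}|; (σ', π') consists only of 2-cycles and 4-cycles (τ = σ'⁻¹∘π' is an involution); every 4-cycle of (σ', π') is aligned; and every two distinct 4-cycles of (σ', π') are nested. -/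
section RecovAPAux

/-- Compare sums that differ at only two points. -/
lemma recovAP_sum_pair_le {k : ℕ} (f g : Fin k → ℝ) (a b : Fin k) (hab : a ≠ b)
    (h : ∀ j, j ≠ a → j ≠ b → f j = g j) (hp : f a + f b ≤ g a + g b) :
    ∑ j, f j ≤ ∑ j, g j := by
  have hb : b ∈ (Finset.univ.erase a) := Finset.mem_erase.mpr ⟨hab.symm, Finset.mem_univ b⟩
  have hrw : ∀ F : Fin k → ℝ,
      ∑ j, F j = F a + (F b + ∑ j ∈ ((Finset.univ.erase a).erase b), F j) := by
    intro F
    rw [← Finset.add_sum_erase _ F (Finset.mem_univ a), ← Finset.add_sum_erase _ F hb]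
  rw [hrw f, hrw g]
  have : ∑ j ∈ ((Finset.univ.erase a).erase b), f j
      = ∑ j ∈ ((Finset.univ.erase a).erase b), g j := by
    apply Finset.sum_congr rfl
    intro x hx
    have hx1 := Finset.mem_erase.mp hx
    have hx2 := Finset.mem_erase.mp hx1.2
    exact h x hx2.1 hx1.1
  linarith

/-- Monge sorting lemma: the identity pairing minimizes the sum for a Monge cost. -/
lemma recovAP_sortMin : ∀ (k : ℕ) (C : Fin k → Fin k → ℝ)
    (_ : ∀ a b c d : Fin k, a < b → c < d → C a c + C b d ≤ C a d + C b c)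
    (e : Equiv.Perm (Fin k)), ∑ j, C j j ≤ ∑ j, C j (e j) := by
  intro k
  induction k with
  | zero => intro C hC e; simp
  | succ k ih =>
    intro C hC e
    set a := e.symm 0 with ha
    have hea : e a = 0 := e.apply_symm_apply 0
    set e' : Equiv.Perm (Fin (k+1)) := e * Equiv.swap a 0 with he'
    have h0 : e' 0 = 0 := by
      simp [he', Equiv.Perm.mul_apply, Equiv.swap_apply_right, hea]
    have step1 : ∑ j, C j (e' j) ≤ ∑ j, C j (e j) := by
      by_cases hz : a = 0
      · simp [he', hz]
      · apply recovAP_sum_pair_le _ _ 0 a (Ne.symm hz)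
        · intro j hj0 hja
          simp [he', Equiv.Perm.mul_apply, Equiv.swap_apply_of_ne_of_ne hja hj0]
        · have h1 : e' a = e 0 := by simp [he', Equiv.Perm.mul_apply, Equiv.swap_apply_left]
          have h2 : (0 : Fin (k+1)) < a := Fin.pos_of_ne_zero hz
          have h3 : (0 : Fin (k+1)) < e 0 := by
            apply Fin.pos_of_ne_zero
            intro h
            exact hz (e.injective (hea.trans h.symm))
          rw [h0, h1, hea]
          have := hC 0 a 0 (e 0) h2 h3
          linarith [this]
    have hsucc_ne : ∀ i : Fin k, e' i.succ ≠ 0 := by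
      intro i hcon
      exact (Fin.succ_ne_zero i) (e'.injective (hcon.trans h0.symm))
    set ebar : Fin k → Fin k := fun i => (e' i.succ).pred (hsucc_ne i) with hebar
    have hinj : Function.Injective ebar := by
      intro i j hij
      have : e' i.succ = e' j.succ := by
        have := congrArg Fin.succ hij
        simpa [hebar, Fin.succ_pred] using this
      exact Fin.succ_injective _ (e'.injective this)
    have hbij := Finite.injective_iff_bijective.mp hinj
    set eb : Equiv.Perm (Fin k) := Equiv.ofBijective ebar hbij with heb
    have key : ∀ i : Fin k, e' i.succ = (eb i).succ := by
      intro i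
      simp [heb, Equiv.ofBijective_apply, hebar, Fin.succ_pred]
    calc ∑ j, C j j = C 0 0 + ∑ i : Fin k, C i.succ i.succ := Fin.sum_univ_succ _
      _ ≤ C 0 0 + ∑ i : Fin k, C i.succ (eb i).succ := by
          have := ih (fun i j => C i.succ j.succ)
            (fun a b c d h1 h2 => hC a.succ b.succ c.succ d.succ
              (Fin.succ_lt_succ_iff.mpr h1) (Fin.succ_lt_succ_iff.mpr h2)) eb
          linarith
      _ = ∑ j, C j (e' j) := by
          rw [Fin.sum_univ_succ]
          congr 1
          · rw [h0]
          · exact Finset.sum_congr rfl fun i _ => by rw [key]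
      _ ≤ ∑ j, C j (e j) := step1

/-- Patch a permutation: replace its action on `D` by an arbitrary bijection `w : D ≃ V`,
where `V = σ(D)`. -/
lemma recovAP_patch_perm {n : ℕ} (σ : Equiv.Perm (Fin n)) (D V : Finset (Fin n))
    (hmem : ∀ i, σ i ∈ V ↔ i ∈ D) (w : {x // x ∈ D} ≃ {x // x ∈ V}) :
    ∃ σ' : Equiv.Perm (Fin n),
      (∀ i (h : i ∈ D), σ' i = ↑(w ⟨i, h⟩)) ∧ (∀ i, i ∉ D → σ' i = σ i) ∧
      (∀ j (h : j ∈ V), σ'.symm j = ↑(w.symm ⟨j, h⟩)) ∧ (∀ j, j ∉ V → σ'.symm j = σ.symm j) := by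
  classical
  set f : Fin n → Fin n := fun i => if h : i ∈ D then ↑(w ⟨i, h⟩) else σ i with hf
  set g : Fin n → Fin n := fun j => if h : j ∈ V then ↑(w.symm ⟨j, h⟩) else σ.symm j with hg
  have li : Function.LeftInverse g f := by
    intro i
    by_cases h : i ∈ D
    · have hV' : (↑(w ⟨i, h⟩) : Fin n) ∈ V := (w ⟨i, h⟩).2
      simp only [hf, hg, dif_pos h, dif_pos hV']
      have : (⟨↑(w ⟨i, h⟩), hV'⟩ : {x // x ∈ V}) = w ⟨i, h⟩ := Subtype.ext rfl
      rw [this, Equiv.symm_apply_apply]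
    · have hV' : σ i ∉ V := fun hc => h ((hmem i).mp hc)
      simp only [hf, hg, dif_neg h, dif_neg hV', Equiv.symm_apply_apply]
  have ri : Function.RightInverse g f := by
    intro j
    by_cases h : j ∈ V
    · have hD' : (↑(w.symm ⟨j, h⟩) : Fin n) ∈ D := (w.symm ⟨j, h⟩).2
      simp only [hf, hg, dif_pos h, dif_pos hD']
      have : (⟨↑(w.symm ⟨j, h⟩), hD'⟩ : {x // x ∈ D}) = w.symm ⟨j, h⟩ := Subtype.ext rfl
      rw [this, Equiv.apply_symm_apply]
    · have hD' : σ.symm j ∉ D := by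
        intro hc
        have hj : σ (σ.symm j) ∈ V := (hmem (σ.symm j)).mpr hc
        rw [σ.apply_symm_apply] at hj
        exact h hj
      simp only [hf, hg, dif_neg h, dif_neg hD', Equiv.apply_symm_apply]
  refine ⟨⟨f, g, li, ri⟩, ?_, ?_, ?_, ?_⟩
  · intro i h; simp only [hf, Equiv.coe_fn_mk, dif_pos h]
  · intro i h; simp only [hf, Equiv.coe_fn_mk, dif_neg h]
  · intro j h; simp only [hg, Equiv.coe_fn_symm_mk, dif_pos h]
  · intro j h; simp only [hg, Equiv.coe_fn_symm_mk, dif_neg h]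

end RecovAPAux



/-- **Lemma: no long cycles.**
Let `A` be Monge and `B` Anti-Monge and let `(σ, π)` be any pair of permutations of `{1,…,n}`.
Then there is a pair `(σ', π')` with cost at most that of `(σ, π)` and at least as many
agreements, such that `τ = σ'⁻¹ ∘ π'` is an involution (only 2-cycles and 4-cycles), every
4-cycle is aligned (`i < i'` and `τ i = i'` imply `σ' i < σ' i'`), and every two distinct
4-cycles are nested. -/
theorem recovAP_monge_antiMonge_no_long_cycles (n : ℕ) (hn : 1 ≤ n)
    (A B : Fin n → Fin n → ℝ)
    (hA : ∀ i k j l : Fin n, i < k → j < l → A i j + A k l ≤ A i l + A k j)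
    (hB : ∀ i k j l : Fin n, i < k → j < l → B i l + B k j ≤ B i j + B k l)
    (σ π : Equiv.Perm (Fin n)) :
    ∃ σ' π' : Equiv.Perm (Fin n),
      -- cost does not increase
      (∑ i, A i (σ' i)) + (∑ i, B i (π' i)) ≤ (∑ i, A i (σ i)) + (∑ i, B i (π i)) ∧
      -- number of agreements does not decrease
      (Finset.univ.filter fun i : Fin n => σ i = π i).card ≤
        (Finset.univ.filter fun i : Fin n => σ' i = π' i).card ∧
      -- only 2-cycles and 4-cycles: σ'⁻¹ ∘ π' is an involution
      (σ'⁻¹ * π') * (σ'⁻¹ * π') = 1 ∧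
      -- every 4-cycle is aligned
      (∀ i i' : Fin n, i < i' → (σ'⁻¹ * π') i = i' → σ' i < σ' i') ∧
      -- every two distinct 4-cycles are nested
      (∀ i₁ i₁' i₂ i₂' : Fin n, i₁ < i₁' → i₂ < i₂' →
        (σ'⁻¹ * π') i₁ = i₁' → (σ'⁻¹ * π') i₂ = i₂' → i₁ ≠ i₂ →
        ((i₂ < i₁ ∧ i₁' < i₂' ∧
            σ' i₂ < σ' i₁ ∧ σ' i₁ < σ' i₁' ∧ σ' i₁' < σ' i₂') ∨
         (i₁ < i₂ ∧ i₂' < i₁' ∧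
            σ' i₁ < σ' i₂ ∧ σ' i₂ < σ' i₂' ∧ σ' i₂' < σ' i₁'))) := by
  classical
  set D : Finset (Fin n) := Finset.univ.filter (fun i => σ i ≠ π i) with hDdef
  set V : Finset (Fin n) := D.image ⇑σ with hVdef
  have hVcard : V.card = D.card := Finset.card_image_of_injective _ σ.injective
  set p : Fin D.card ≃o {x // x ∈ D} := D.orderIsoOfFin rfl with hpdef
  set v : Fin D.card ≃o {x // x ∈ V} := V.orderIsoOfFin hVcard with hvdef
  -- membership facts
  have hmemV : ∀ i, σ i ∈ V ↔ i ∈ D := by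
    intro i
    constructor
    · intro h
      rcases Finset.mem_image.mp h with ⟨a, haD, ha⟩
      rwa [← σ.injective ha]
    · intro h; exact Finset.mem_image_of_mem _ h
  have hDmem : ∀ i, i ∈ D ↔ σ i ≠ π i := by
    intro i; simp [hDdef]
  have hmemVπ : ∀ i, i ∈ D → π i ∈ V := by
    intro i h
    have hb : σ.symm (π i) ∈ D := by
      rw [hDmem] at h ⊢
      intro hc
      rw [σ.apply_symm_apply] at hc
      have hip : i = σ.symm (π i) := π.injective hc
      have h2 : σ i = σ (σ.symm (π i)) := congrArg σ hip
      rw [σ.apply_symm_apply] at h2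
      exact h h2
    have : σ (σ.symm (π i)) ∈ V := Finset.mem_image_of_mem _ hb
    rwa [σ.apply_symm_apply] at this
  -- monotone coercion facts
  have hpmono : ∀ {x y : Fin D.card}, x < y → (↑(p x) : Fin n) < ↑(p y) :=
    fun h => Subtype.coe_lt_coe.mpr (p.lt_iff_lt.mpr h)
  have hvmono : ∀ {x y : Fin D.card}, x < y → (↑(v x) : Fin n) < ↑(v y) :=
    fun h => Subtype.coe_lt_coe.mpr (v.lt_iff_lt.mpr h)
  -- the two patched permutations
  set wσ : {x // x ∈ D} ≃ {x // x ∈ V} := p.toEquiv.symm.trans v.toEquiv with hwσ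
  set wπ : {x // x ∈ D} ≃ {x // x ∈ V} :=
    p.toEquiv.symm.trans ((Fin.revPerm).trans v.toEquiv) with hwπ
  obtain ⟨σ', hσ'D, hσ'N, hσ'sV, hσ'sN⟩ := recovAP_patch_perm σ D V hmemV wσ
  obtain ⟨π', hπ'D, hπ'N, hπ'sV, hπ'sN⟩ := recovAP_patch_perm σ D V hmemV wπ
  have hσ'p : ∀ x : Fin D.card, σ' ↑(p x) = ↑(v x) := by
    intro x
    rw [hσ'D ↑(p x) (p x).2]
    have e1 : (⟨↑(p x), (p x).2⟩ : {y // y ∈ D}) = p x := Subtype.coe_eta _ _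
    simp only [hwσ, Equiv.trans_apply, e1]
    congr 1
    exact congrArg v (Equiv.symm_apply_apply p.toEquiv x)
  have hπ'p : ∀ x : Fin D.card, π' ↑(p x) = ↑(v (Fin.rev x)) := by
    intro x
    rw [hπ'D ↑(p x) (p x).2]
    have e1 : (⟨↑(p x), (p x).2⟩ : {y // y ∈ D}) = p x := Subtype.coe_eta _ _
    simp only [hwπ, Equiv.trans_apply, e1]
    congr 1
    exact congrArg (fun y : Fin D.card => v (Fin.rev y)) (Equiv.symm_apply_apply p.toEquiv x)
  have htau : ∀ i, (σ'⁻¹ * π') i = σ'.symm (π' i) := fun i => rfl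
  have htauD : ∀ x : Fin D.card, (σ'⁻¹ * π') ↑(p x) = ↑(p (Fin.rev x)) := by
    intro x
    rw [htau, hπ'p]
    have hm : (↑(v (Fin.rev x)) : Fin n) ∈ V := (v (Fin.rev x)).2
    rw [hσ'sV _ hm]
    have e1 : (⟨↑(v (Fin.rev x)), hm⟩ : {y // y ∈ V}) = v (Fin.rev x) := Subtype.coe_eta _ _
    simp only [hwσ, Equiv.symm_trans_apply, e1]
    congr 1
    exact congrArg p (Equiv.symm_apply_apply v.toEquiv (Fin.rev x))
  have htauN : ∀ i, i ∉ D → (σ'⁻¹ * π') i = i := by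
    intro i h
    rw [htau, hπ'N i h, hσ'sN _ (fun hc => h ((hmemV i).mp hc)), Equiv.symm_apply_apply]
  -- orbit decomposition
  have horb : ∀ i i' : Fin n, i < i' → (σ'⁻¹ * π') i = i' →
      ∃ x : Fin D.card, i = ↑(p x) ∧ i' = ↑(p (Fin.rev x)) ∧ x < Fin.rev x := by
    intro i i' hlt ht
    by_cases h : i ∈ D
    · set x := p.symm ⟨i, h⟩ with hx
      have hi : (↑(p x) : Fin n) = i := by rw [hx, OrderIso.apply_symm_apply]
      have h2 : (σ'⁻¹ * π') i = ↑(p (Fin.rev x)) := by rw [← hi]; exact htauD x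
      have hi' : i' = ↑(p (Fin.rev x)) := by rw [← ht, h2]
      have hxlt : x < Fin.rev x := by
        have h4 : (↑(p x) : Fin n) < ↑(p (Fin.rev x)) := by rw [hi, ← hi']; exact hlt
        exact p.lt_iff_lt.mp (Subtype.coe_lt_coe.mp h4)
      exact ⟨x, hi.symm, hi', hxlt⟩
    · exfalso
      rw [htauN i h] at ht
      exact (ne_of_lt hlt) ht
  -- involution
  have hinv : (σ'⁻¹ * π') * (σ'⁻¹ * π') = 1 := by
    apply Equiv.ext
    intro i
    show (σ'⁻¹ * π') ((σ'⁻¹ * π') i) = i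
    by_cases h : i ∈ D
    · set x := p.symm ⟨i, h⟩ with hx
      have hi : (↑(p x) : Fin n) = i := by rw [hx, OrderIso.apply_symm_apply]
      calc (σ'⁻¹ * π') ((σ'⁻¹ * π') i) = (σ'⁻¹ * π') ↑(p (Fin.rev x)) := by
            rw [← hi, htauD]
        _ = ↑(p (Fin.rev (Fin.rev x))) := htauD _
        _ = i := by rw [Fin.rev_rev, hi]
    · rw [htauN i h, htauN i h]
  -- aligned
  have haligned : ∀ i i' : Fin n, i < i' → (σ'⁻¹ * π') i = i' → σ' i < σ' i' := by
    intro i i' hlt ht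
    obtain ⟨x, hi, hi', hx⟩ := horb i i' hlt ht
    rw [hi, hi', hσ'p, hσ'p]
    exact hvmono hx
  -- agreements
  have hagree : (Finset.univ.filter fun i : Fin n => σ i = π i).card ≤
      (Finset.univ.filter fun i : Fin n => σ' i = π' i).card := by
    apply Finset.card_le_card
    intro i hi
    simp only [Finset.mem_filter, Finset.mem_univ, true_and] at hi ⊢
    have hiD : i ∉ D := by rw [hDmem]; exact fun hc => hc hi
    rw [hσ'N i hiD, hπ'N i hiD]
  -- sum reindexing
  have hre : ∀ F : Fin n → ℝ, ∑ i ∈ D, F i = ∑ x : Fin D.card, F ↑(p x) := by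
    intro F
    rw [← Finset.sum_coe_sort D F]
    exact (Equiv.sum_comp p.toEquiv (fun x : {x // x ∈ D} => F ↑x)).symm
  -- cost A
  have hcostA : ∑ i, A i (σ' i) ≤ ∑ i, A i (σ i) := by
    rw [← Finset.sum_filter_add_sum_filter_not Finset.univ (fun i => i ∈ D)
      (fun i => A i (σ' i)),
        ← Finset.sum_filter_add_sum_filter_not Finset.univ (fun i => i ∈ D)
      (fun i => A i (σ i))]
    have hfil : Finset.univ.filter (fun i => i ∈ D) = D := by
      ext i; simp
    have hNot : ∑ i ∈ Finset.univ.filter (fun i => i ∉ D), A i (σ' i)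
        = ∑ i ∈ Finset.univ.filter (fun i => i ∉ D), A i (σ i) :=
      Finset.sum_congr rfl (fun i hi => by
        rw [hσ'N i (Finset.mem_filter.mp hi).2])
    rw [hfil]
    have hmemx : ∀ x : Fin D.card, σ ↑(p x) ∈ V := fun x => (hmemV _).mpr (p x).2
    set E : Fin D.card → Fin D.card := fun x => v.symm ⟨σ ↑(p x), hmemx x⟩ with hE
    have hEinj : Function.Injective E := by
      intro a b hab
      have h1 : (⟨σ ↑(p a), hmemx a⟩ : {x // x ∈ V}) = ⟨σ ↑(p b), hmemx b⟩ :=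
        v.symm.injective hab
      have h2 : σ ↑(p a) = σ ↑(p b) := congrArg Subtype.val h1
      have h3 : (↑(p a) : Fin n) = ↑(p b) := σ.injective h2
      exact p.injective (Subtype.coe_injective h3)
    set e : Equiv.Perm (Fin D.card) :=
      Equiv.ofBijective E (Finite.injective_iff_bijective.mp hEinj) with he
    have hEe : ∀ x, σ ↑(p x) = ↑(v (e x)) := by
      intro x
      show σ ↑(p x) = ↑(v (E x))
      rw [hE]
      simp only [OrderIso.apply_symm_apply]
    have hmain : ∑ i ∈ D, A i (σ' i) ≤ ∑ i ∈ D, A i (σ i) := by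
      rw [hre (fun i => A i (σ' i)), hre (fun i => A i (σ i))]
      calc ∑ x : Fin D.card, A ↑(p x) (σ' ↑(p x))
          = ∑ x : Fin D.card, A ↑(p x) ↑(v x) :=
            Finset.sum_congr rfl (fun x _ => by rw [hσ'p])
        _ ≤ ∑ x : Fin D.card, A ↑(p x) ↑(v (e x)) :=
            recovAP_sortMin _ (fun j l => A ↑(p j) ↑(v l))
              (fun a b c d hab hcd => hA _ _ _ _ (hpmono hab) (hvmono hcd)) e
        _ = ∑ x : Fin D.card, A ↑(p x) (σ ↑(p x)) :=
            Finset.sum_congr rfl (fun x _ => by rw [hEe])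
    linarith
  -- cost B
  have hcostB : ∑ i, B i (π' i) ≤ ∑ i, B i (π i) := by
    rw [← Finset.sum_filter_add_sum_filter_not Finset.univ (fun i => i ∈ D)
      (fun i => B i (π' i)),
        ← Finset.sum_filter_add_sum_filter_not Finset.univ (fun i => i ∈ D)
      (fun i => B i (π i))]
    have hfil : Finset.univ.filter (fun i => i ∈ D) = D := by
      ext i; simp
    have hNot : ∑ i ∈ Finset.univ.filter (fun i => i ∉ D), B i (π' i)
        = ∑ i ∈ Finset.univ.filter (fun i => i ∉ D), B i (π i) :=
      Finset.sum_congr rfl (fun i hi => by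
        have hiD := (Finset.mem_filter.mp hi).2
        have hagr : σ i = π i := by
          by_contra hc
          exact hiD ((hDmem i).mpr hc)
        rw [hπ'N i hiD, hagr])
    rw [hfil]
    have hmemx : ∀ x : Fin D.card, π ↑(p x) ∈ V := fun x => hmemVπ _ (p x).2
    set E : Fin D.card → Fin D.card := fun x => v.symm ⟨π ↑(p x), hmemx x⟩ with hE
    have hEinj : Function.Injective E := by
      intro a b hab
      have h1 : (⟨π ↑(p a), hmemx a⟩ : {x // x ∈ V}) = ⟨π ↑(p b), hmemx b⟩ :=
        v.symm.injective hab
      have h2 : π ↑(p a) = π ↑(p b) := congrArg Subtype.val h1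
      have h3 : (↑(p a) : Fin n) = ↑(p b) := π.injective h2
      exact p.injective (Subtype.coe_injective h3)
    set e2 : Equiv.Perm (Fin D.card) :=
      Equiv.ofBijective E (Finite.injective_iff_bijective.mp hEinj) with he2
    have hEe : ∀ x, π ↑(p x) = ↑(v (e2 x)) := by
      intro x
      show π ↑(p x) = ↑(v (E x))
      rw [hE]
      simp only [OrderIso.apply_symm_apply]
    set ehat : Equiv.Perm (Fin D.card) := e2.trans Fin.revPerm with hehat
    have hrevhat : ∀ x, Fin.rev (ehat x) = e2 x := by
      intro x
      simp [hehat, Fin.rev_rev]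
    have hmain : ∑ i ∈ D, B i (π' i) ≤ ∑ i ∈ D, B i (π i) := by
      rw [hre (fun i => B i (π' i)), hre (fun i => B i (π i))]
      calc ∑ x : Fin D.card, B ↑(p x) (π' ↑(p x))
          = ∑ x : Fin D.card, B ↑(p x) ↑(v (Fin.rev x)) :=
            Finset.sum_congr rfl (fun x _ => by rw [hπ'p])
        _ ≤ ∑ x : Fin D.card, B ↑(p x) ↑(v (Fin.rev (ehat x))) :=
            recovAP_sortMin _ (fun j l => B ↑(p j) ↑(v (Fin.rev l)))
              (fun a b c d hab hcd => hB _ _ _ _ (hpmono hab)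
                (hvmono (Fin.rev_lt_rev.mpr hcd))) ehat
        _ = ∑ x : Fin D.card, B ↑(p x) (π ↑(p x)) :=
            Finset.sum_congr rfl (fun x _ => by rw [hrevhat, hEe])
    linarith
  -- nested
  have hnested : ∀ i₁ i₁' i₂ i₂' : Fin n, i₁ < i₁' → i₂ < i₂' →
      (σ'⁻¹ * π') i₁ = i₁' → (σ'⁻¹ * π') i₂ = i₂' → i₁ ≠ i₂ →
      ((i₂ < i₁ ∧ i₁' < i₂' ∧
          σ' i₂ < σ' i₁ ∧ σ' i₁ < σ' i₁' ∧ σ' i₁' < σ' i₂') ∨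
       (i₁ < i₂ ∧ i₂' < i₁' ∧
          σ' i₁ < σ' i₂ ∧ σ' i₂ < σ' i₂' ∧ σ' i₂' < σ' i₁')) := by
    intro i₁ i₁' i₂ i₂' h1 h2 ht1 ht2 hne
    obtain ⟨x₁, e1, e1', hx1⟩ := horb _ _ h1 ht1
    obtain ⟨x₂, e2, e2', hx2⟩ := horb _ _ h2 ht2
    have hxne : x₁ ≠ x₂ := by
      intro h; apply hne; rw [e1, e2, h]
    rcases lt_or_gt_of_ne hxne with hlt | hgt
    · right
      refine ⟨?_, ?_, ?_, ?_, ?_⟩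
      · rw [e1, e2]; exact hpmono hlt
      · rw [e1', e2']; exact hpmono (Fin.rev_lt_rev.mpr hlt)
      · rw [e1, e2, hσ'p, hσ'p]; exact hvmono hlt
      · rw [e2, e2', hσ'p, hσ'p]; exact hvmono hx2
      · rw [e1', e2', hσ'p, hσ'p]; exact hvmono (Fin.rev_lt_rev.mpr hlt)
    · left
      refine ⟨?_, ?_, ?_, ?_, ?_⟩
      · rw [e1, e2]; exact hpmono hgt
      · rw [e1', e2']; exact hpmono (Fin.rev_lt_rev.mpr hgt)
      · rw [e1, e2, hσ'p, hσ'p]; exact hvmono hgt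
      · rw [e1, e1', hσ'p, hσ'p]; exact hvmono hx1
      · rw [e1', e2', hσ'p, hσ'p]; exact hvmono (Fin.rev_lt_rev.mpr hgt)
  exact ⟨σ', π', add_le_add hcostA hcostB, hagree, hinv, haligned, hnested⟩
end

section
/- (Lemma: 2-cycles nested inside 4-cycles.) Let n ≥ 1, let A ∈ ℝ^{n×n} be Monge, let B ∈ ℝ^{n×n} be Anti-Monge, and let 0 ≤ k ≤ n. Then there exists an optimal solution (σ, π) of RecovAP (feasible with minimum cost among all feasible pairs) such that (σ, π) consists only of 2-cycles and 4-cycles, every 4-cycle is aligned, every two distinct 4-cycles are nested, and every 2-cycle is nested inside every 4-cycle: for every index x with σ(x) = π(x) and every orbit {i, i'} of σ⁻¹∘π with i < i', one has i < x < i' and σ(i) < σ(x) < σ(i'). -/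
/-!
Choose a feasible pair of minimum cost and, among those, one minimising the potential
`∑ i, i * (π i - σ i)`. Exchanging two values of `σ` that stand in decreasing order does not
increase the Monge cost and strictly increases `∑ i, i * σ i`; exchanging two values of `π` in
increasing order does not increase the Anti-Monge cost and strictly decreases `∑ i, i * π i`.
At the chosen pair every composition of such exchanges therefore loses agreements. Single
exchanges show that `σ` increases and `π` decreases on the set `D` of disagreements; hence
`σ⁻¹ * π` reverses the order of `D` and is an involution, which gives aligned, pairwise nested
4-cycles. A 2-cycle `x` that is not nested in a 4-cycle `{i, i'}` is removed by at most two
exchanges on the rows `x, i, i'` that leave one agreement among these rows.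
-/

open Finset Equiv

theorem StrictMonoOn.eqOn_id_of_mapsTo {α : Type*} [LinearOrder α] {f : α → α} {s : Set α}
    (hs : s.Finite) (hf : StrictMonoOn f s) (hmaps : Set.MapsTo f s s) : s.EqOn f id := by
  have : Finite s := hs
  have hg : StrictMono (hmaps.restrict f s s) := fun a b hab => hf a.2 b.2 hab
  let e := hg.orderIsoOfSurjective _ (Finite.injective_iff_surjective.mp hg.injective)
  intro x hx
  exact congrArg Subtype.val (DFunLike.congr_fun (Subsingleton.elim e (OrderIso.refl s)) ⟨x, hx⟩)

theorem Fintype.sum_comp_swap_sub {ι κ M : Type*} [Fintype ι] [DecidableEq ι] [AddCommGroup M]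
    (f : ι → κ → M) (ρ : ι → κ) {i j : ι} (hij : i ≠ j) :
    ∑ h, f h (ρ (swap i j h)) - ∑ h, f h (ρ h) =
      f i (ρ j) + f j (ρ i) - (f i (ρ i) + f j (ρ j)) := by
  rw [← Finset.sum_sub_distrib, Fintype.sum_eq_add i j hij]
  · simp only [swap_apply_left, swap_apply_right]; abel
  · rintro h ⟨hi, hj⟩
    rw [swap_apply_of_ne_of_ne hi hj, sub_self]

theorem Finset.card_le_card_of_erase_subset_erase {α : Type*} [DecidableEq α]
    {s t : Finset α} {a b : α} (hb : b ∈ t) (h : s.erase a ⊆ t.erase b) : #s ≤ #t := by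
  have := card_le_card h
  have := pred_card_le_card_erase (s := s) (a := a)
  have := card_erase_add_one hb
  omega

namespace RecovAP

variable {n : ℕ}

def IsMonge (C : Fin n → Fin n → ℝ) : Prop :=
  ∀ i k j l : Fin n, i < k → j < l → C i j + C k l ≤ C i l + C k j

def IsAntiMonge (C : Fin n → Fin n → ℝ) : Prop :=
  ∀ i k j l : Fin n, i < k → j < l → C i l + C k j ≤ C i j + C k l

def cost (A B : Fin n → Fin n → ℝ) (σ π : Perm (Fin n)) : ℝ :=
  ∑ i, A i (σ i) + ∑ i, B i (π i)

def agreements (σ π : Perm (Fin n)) : Finset (Fin n) := {i | σ i = π i}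

@[simp]
theorem mem_agreements {σ π : Perm (Fin n)} {i : Fin n} : i ∈ agreements σ π ↔ σ i = π i := by
  simp [agreements]

def weight (ρ : Perm (Fin n)) : ℤ := ∑ i, (i.val : ℤ) * (ρ i).val

def potential (σ π : Perm (Fin n)) : ℤ := weight π - weight σ

def Improves (A B : Fin n → Fin n → ℝ) (σ π σ' π' : Perm (Fin n)) : Prop :=
  cost A B σ' π' ≤ cost A B σ π ∧ potential σ' π' < potential σ π

variable {A B : Fin n → Fin n → ℝ} {σ π σ' π' σ'' π'' : Perm (Fin n)}

theorem card_agreements_mul_right (s : Perm (Fin n)) :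
    #(agreements (σ * s) (π * s)) = #(agreements σ π) :=
  card_nbij' s ⇑s⁻¹ (by intro i; simp) (by intro i; simp) (by intro i; simp) (by intro i; simp)

theorem Improves.trans (h : Improves A B σ π σ' π') (h' : Improves A B σ' π' σ'' π'') :
    Improves A B σ π σ'' π'' :=
  ⟨h'.1.trans h.1, h'.2.trans h.2⟩

theorem improves_mul_swap_left (hA : IsMonge A) {i j : Fin n} (hij : i < j) (h : σ j < σ i) :
    Improves A B σ π (σ * swap i j) π := by
  have hcost := Fintype.sum_comp_swap_sub A σ hij.ne
  have hweight := Fintype.sum_comp_swap_sub (fun a v : Fin n => (a.val : ℤ) * v.val) σ hij.ne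
  have hmonge := hA i j (σ j) (σ i) hij h
  have hij' : (i.val : ℤ) < j.val := by exact_mod_cast hij
  have h' : ((σ j).val : ℤ) < (σ i).val := by exact_mod_cast h
  constructor
  · simp only [cost, Perm.mul_apply]; linarith
  · simp only [potential, weight, Perm.mul_apply] at hweight ⊢; nlinarith

theorem improves_mul_swap_right (hB : IsAntiMonge B) {i j : Fin n} (hij : i < j) (h : π i < π j) :
    Improves A B σ π σ (π * swap i j) := by
  have hcost := Fintype.sum_comp_swap_sub B π hij.ne
  have hweight := Fintype.sum_comp_swap_sub (fun a v : Fin n => (a.val : ℤ) * v.val) π hij.ne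
  have hmonge := hB i j (π i) (π j) hij h
  have hij' : (i.val : ℤ) < j.val := by exact_mod_cast hij
  have h' : ((π i).val : ℤ) < (π j).val := by exact_mod_cast h
  constructor
  · simp only [cost, Perm.mul_apply]; linarith
  · simp only [potential, weight, Perm.mul_apply] at hweight ⊢; nlinarith

def IsLexOptimal (A B : Fin n → Fin n → ℝ) (k : ℕ) (σ π : Perm (Fin n)) : Prop :=
  k ≤ #(agreements σ π) ∧ ∀ σ' π' : Perm (Fin n), k ≤ #(agreements σ' π') →
    toLex (cost A B σ π, potential σ π) ≤ toLex (cost A B σ' π', potential σ' π')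

theorem exists_isLexOptimal (A B : Fin n → Fin n → ℝ) {k : ℕ} (hk : k ≤ n) :
    ∃ σ π, IsLexOptimal A B k σ π := by
  obtain ⟨p, hp, hmin⟩ := (univ.filter fun p : Perm (Fin n) × Perm (Fin n) =>
      k ≤ #(agreements p.1 p.2)).exists_min_image
    (fun p => toLex (cost A B p.1 p.2, potential p.1 p.2))
    ⟨(1, 1), mem_filter.2 ⟨mem_univ _, by simpa [agreements] using hk⟩⟩
  exact ⟨p.1, p.2, (mem_filter.1 hp).2, fun σ' π' h => hmin (σ', π') (by simp [h])⟩

variable {k : ℕ}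

theorem IsLexOptimal.cost_le (hopt : IsLexOptimal A B k σ π) (h : k ≤ #(agreements σ' π')) :
    cost A B σ π ≤ cost A B σ' π' := by
  rcases Prod.Lex.toLex_le_toLex.1 (hopt.2 σ' π' h) with h | h
  exacts [h.le, h.1.le]

theorem IsLexOptimal.card_agreements_lt (hopt : IsLexOptimal A B k σ π)
    (himp : Improves A B σ π σ' π') : #(agreements σ' π') < #(agreements σ π) := by
  by_contra! hle
  refine (hopt.2 σ' π' (hopt.1.trans hle)).not_gt (Prod.Lex.toLex_lt_toLex.2 ?_)
  rcases himp.1.lt_or_eq with h | h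
  exacts [Or.inl h, Or.inr ⟨h, himp.2⟩]

theorem IsLexOptimal.strictMonoOn (hA : IsMonge A) (hopt : IsLexOptimal A B k σ π) :
    StrictMonoOn σ {i | σ i ≠ π i} := by
  intro i hi j hj hij
  by_contra! hle
  have hlt : σ j < σ i := hle.lt_of_ne (σ.injective.ne hij.ne')
  refine (hopt.card_agreements_lt (improves_mul_swap_left hA hij hlt)).not_ge (card_le_card ?_)
  intro h hh
  rw [mem_agreements] at hh ⊢
  rwa [Perm.mul_apply,
    swap_apply_of_ne_of_ne (by rintro rfl; exact hi hh) (by rintro rfl; exact hj hh)]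

theorem IsLexOptimal.strictAntiOn (hB : IsAntiMonge B) (hopt : IsLexOptimal A B k σ π) :
    StrictAntiOn π {i | σ i ≠ π i} := by
  intro i hi j hj hij
  by_contra! hle
  have hlt : π i < π j := hle.lt_of_ne (π.injective.ne hij.ne)
  refine (hopt.card_agreements_lt (improves_mul_swap_right hB hij hlt)).not_ge (card_le_card ?_)
  intro h hh
  rw [mem_agreements] at hh ⊢
  rwa [Perm.mul_apply,
    swap_apply_of_ne_of_ne (by rintro rfl; exact hi hh) (by rintro rfl; exact hj hh)]

@[simp]
theorem apply_inv_mul_apply (i : Fin n) : σ ((σ⁻¹ * π) i) = π i := by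
  simp

theorem inv_mul_apply_of_eq {i : Fin n} (h : σ i = π i) : (σ⁻¹ * π) i = i := by
  simp [← h]

theorem mapsTo_inv_mul : Set.MapsTo (σ⁻¹ * π) {i | σ i ≠ π i} {i | σ i ≠ π i} := by
  intro i hi h
  have hfix : (σ⁻¹ * π) i = i := π.injective (by simpa using h.symm)
  exact hi (by simpa [hfix] using apply_inv_mul_apply (σ := σ) (π := π) i)

theorem IsLexOptimal.strictAntiOn_inv_mul (hA : IsMonge A) (hB : IsAntiMonge B)
    (hopt : IsLexOptimal A B k σ π) : StrictAntiOn (σ⁻¹ * π) {i | σ i ≠ π i} := by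
  intro i hi j hj hij
  rw [← (hopt.strictMonoOn hA).lt_iff_lt (mapsTo_inv_mul hj) (mapsTo_inv_mul hi),
    apply_inv_mul_apply, apply_inv_mul_apply]
  exact hopt.strictAntiOn hB hi hj hij

theorem IsLexOptimal.inv_mul_mul_self (hA : IsMonge A) (hB : IsAntiMonge B)
    (hopt : IsLexOptimal A B k σ π) : (σ⁻¹ * π) * (σ⁻¹ * π) = 1 := by
  have hinvol := StrictMonoOn.eqOn_id_of_mapsTo (Set.toFinite _)
    ((hopt.strictAntiOn_inv_mul hA hB).comp (hopt.strictAntiOn_inv_mul hA hB) mapsTo_inv_mul)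
    (mapsTo_inv_mul.comp mapsTo_inv_mul)
  ext i
  by_cases hi : σ i = π i
  · rw [Perm.mul_apply, inv_mul_apply_of_eq hi, inv_mul_apply_of_eq hi, Perm.one_apply]
  · exact congrArg Fin.val (hinvol hi)

theorem IsLexOptimal.lt_of_fourCycle_left (hA : IsMonge A) (hB : IsAntiMonge B)
    (hopt : IsLexOptimal A B k σ π) {x i i' : Fin n} (hx : σ x = π x) (hii' : i < i')
    (hπi : π i = σ i') (hπi' : π i' = σ i) (hv : σ i < σ i') : i < x := by
  have hi : σ i ≠ π i := fun h => hv.ne (h.trans hπi)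
  have hi' : σ i' ≠ π i' := fun h => hv.ne' (h.trans hπi')
  by_contra! hle
  have hxi : x < i := hle.lt_of_ne (by rintro rfl; exact hi hx)
  rcases lt_or_gt_of_ne (σ.injective.ne hxi.ne) with hw | hw
  · have hmove : Improves A B σ π σ (π * swap x i * swap i i') :=
      (improves_mul_swap_right hB hxi (by rw [← hx, hπi]; exact hw.trans hv)).trans
      (improves_mul_swap_right hB hii' (by simp only [Perm.mul_apply]; grind))
    refine (hopt.card_agreements_lt hmove).not_ge
      (card_le_card_of_erase_subset_erase (a := x) (b := i) ?_ ?_)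
    · simp only [mem_agreements, Perm.mul_apply]; grind
    · intro h; simp only [mem_erase, mem_agreements, Perm.mul_apply]; grind
  rcases lt_or_gt_of_ne (σ.injective.ne (hxi.trans hii').ne) with hw' | hw'
  · have hmove : Improves A B σ π (σ * swap x i) (π * swap x i) :=
      (improves_mul_swap_left hA hxi hw).trans
      (improves_mul_swap_right hB hxi (by rw [← hx, hπi]; exact hw'))
    exact (hopt.card_agreements_lt hmove).ne (card_agreements_mul_right _)
  · have hmove : Improves A B σ π (σ * swap x i * swap i i') π :=
      (improves_mul_swap_left hA hxi hw).trans
      (improves_mul_swap_left hA hii' (by simp only [Perm.mul_apply]; grind))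
    refine (hopt.card_agreements_lt hmove).not_ge
      (card_le_card_of_erase_subset_erase (a := x) (b := i) ?_ ?_)
    · simp only [mem_agreements, Perm.mul_apply]; grind
    · intro h; simp only [mem_erase, mem_agreements, Perm.mul_apply]; grind

theorem IsLexOptimal.lt_of_fourCycle_right (hA : IsMonge A) (hB : IsAntiMonge B)
    (hopt : IsLexOptimal A B k σ π) {x i i' : Fin n} (hx : σ x = π x) (hii' : i < i')
    (hπi : π i = σ i') (hπi' : π i' = σ i) (hv : σ i < σ i') : x < i' := by
  have hi : σ i ≠ π i := fun h => hv.ne (h.trans hπi)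
  have hi' : σ i' ≠ π i' := fun h => hv.ne' (h.trans hπi')
  by_contra! hle
  have hxi' : i' < x := hle.lt_of_ne (by rintro rfl; exact hi' hx)
  rcases lt_or_gt_of_ne (σ.injective.ne (hii'.trans hxi').ne') with hw | hw
  · have hmove : Improves A B σ π (σ * swap i' x * swap i i') π :=
      (improves_mul_swap_left hA hxi' (hw.trans hv)).trans
      (improves_mul_swap_left hA hii' (by simp only [Perm.mul_apply]; grind))
    refine (hopt.card_agreements_lt hmove).not_ge
      (card_le_card_of_erase_subset_erase (a := x) (b := i') ?_ ?_)
    · simp only [mem_agreements, Perm.mul_apply]; grind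
    · intro h; simp only [mem_erase, mem_agreements, Perm.mul_apply]; grind
  rcases lt_or_gt_of_ne (σ.injective.ne hxi'.ne') with hw' | hw'
  · have hmove : Improves A B σ π (σ * swap i' x) (π * swap i' x) :=
      (improves_mul_swap_left hA hxi' hw').trans
      (improves_mul_swap_right hB hxi' (by rw [← hx, hπi']; exact hw))
    exact (hopt.card_agreements_lt hmove).ne (card_agreements_mul_right _)
  · have hmove : Improves A B σ π σ (π * swap i' x * swap i i') :=
      (improves_mul_swap_right hB hxi' (by rw [← hx, hπi']; exact hv.trans hw')).trans
      (improves_mul_swap_right hB hii' (by simp only [Perm.mul_apply]; grind))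
    refine (hopt.card_agreements_lt hmove).not_ge
      (card_le_card_of_erase_subset_erase (a := x) (b := i') ?_ ?_)
    · simp only [mem_agreements, Perm.mul_apply]; grind
    · intro h; simp only [mem_erase, mem_agreements, Perm.mul_apply]; grind

theorem IsLexOptimal.apply_lt_of_fourCycle_left (hA : IsMonge A) (hB : IsAntiMonge B)
    (hopt : IsLexOptimal A B k σ π) {x i i' : Fin n} (hx : σ x = π x) (hix : i < x)
    (hxi' : x < i') (hπi : π i = σ i') (hπi' : π i' = σ i) : σ i < σ x := by
  have hi : σ i ≠ π i := fun h => (hix.trans hxi').ne (σ.injective (h.trans hπi))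
  have hi' : σ i' ≠ π i' := fun h => (hix.trans hxi').ne' (σ.injective (h.trans hπi'))
  by_contra! hle
  have hw : σ x < σ i := hle.lt_of_ne (σ.injective.ne hix.ne')
  have hmove : Improves A B σ π (σ * swap i x) (π * swap x i') :=
    (improves_mul_swap_left hA hix hw).trans
    (improves_mul_swap_right hB hxi' (by rw [← hx, hπi']; exact hw))
  refine (hopt.card_agreements_lt hmove).not_ge (card_le_card fun h => ?_)
  simp only [mem_agreements, Perm.mul_apply]
  grind

theorem IsLexOptimal.apply_lt_of_fourCycle_right (hA : IsMonge A) (hB : IsAntiMonge B)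
    (hopt : IsLexOptimal A B k σ π) {x i i' : Fin n} (hx : σ x = π x) (hix : i < x)
    (hxi' : x < i') (hπi : π i = σ i') (hπi' : π i' = σ i) : σ x < σ i' := by
  have hi : σ i ≠ π i := fun h => (hix.trans hxi').ne (σ.injective (h.trans hπi))
  have hi' : σ i' ≠ π i' := fun h => (hix.trans hxi').ne' (σ.injective (h.trans hπi'))
  by_contra! hle
  have hw : σ i' < σ x := hle.lt_of_ne (σ.injective.ne hxi'.ne')
  have hmove : Improves A B σ π (σ * swap x i') (π * swap i x) :=
    (improves_mul_swap_left hA hxi' hw).trans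
    (improves_mul_swap_right hB hix (by rw [← hx, hπi]; exact hw))
  refine (hopt.card_agreements_lt hmove).not_ge (card_le_card fun h => ?_)
  simp only [mem_agreements, Perm.mul_apply]
  grind

theorem IsLexOptimal.apply_lt_apply_of_inv_mul_apply (hA : IsMonge A)
    (hopt : IsLexOptimal A B k σ π) {i i' : Fin n} (hii' : i < i') (hτ : (σ⁻¹ * π) i = i') :
    σ i < σ i' := by
  have hi : σ i ≠ π i := mt inv_mul_apply_of_eq (hτ ▸ hii'.ne')
  exact hopt.strictMonoOn hA hi (hτ ▸ mapsTo_inv_mul hi) hii'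

theorem IsLexOptimal.fourCycles_nested_of_lt (hA : IsMonge A) (hB : IsAntiMonge B)
    (hopt : IsLexOptimal A B k σ π) {i₁ i₁' i₂ i₂' : Fin n} (h₁ : i₁ < i₁') (h₂ : i₂ < i₂')
    (hτ₁ : (σ⁻¹ * π) i₁ = i₁') (hτ₂ : (σ⁻¹ * π) i₂ = i₂') (h : i₁ < i₂) :
    i₂' < i₁' ∧ σ i₁ < σ i₂ ∧ σ i₂ < σ i₂' ∧ σ i₂' < σ i₁' := by
  have hd₁ : σ i₁ ≠ π i₁ := mt inv_mul_apply_of_eq (hτ₁ ▸ h₁.ne')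
  have hd₂ : σ i₂ ≠ π i₂ := mt inv_mul_apply_of_eq (hτ₂ ▸ h₂.ne')
  have hd₁' : σ i₁' ≠ π i₁' := hτ₁ ▸ mapsTo_inv_mul hd₁
  have hd₂' : σ i₂' ≠ π i₂' := hτ₂ ▸ mapsTo_inv_mul hd₂
  have hlt : i₂' < i₁' := hτ₁ ▸ hτ₂ ▸ hopt.strictAntiOn_inv_mul hA hB hd₁ hd₂ h
  have hσ := hopt.strictMonoOn hA
  exact ⟨hlt, hσ hd₁ hd₂ h, hσ hd₂ hd₂' h₂, hσ hd₂' hd₁' hlt⟩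

theorem IsLexOptimal.agreement_nested (hA : IsMonge A) (hB : IsAntiMonge B)
    (hopt : IsLexOptimal A B k σ π) {x i i' : Fin n} (hx : σ x = π x) (hii' : i < i')
    (hτ : (σ⁻¹ * π) i = i') : i < x ∧ x < i' ∧ σ i < σ x ∧ σ x < σ i' := by
  have hπi : π i = σ i' := by rw [← hτ, apply_inv_mul_apply]
  have hτ' : (σ⁻¹ * π) i' = i := hτ ▸ DFunLike.congr_fun (hopt.inv_mul_mul_self hA hB) i
  have hπi' : π i' = σ i := by rw [← hτ', apply_inv_mul_apply]
  have hv := hopt.apply_lt_apply_of_inv_mul_apply hA hii' hτ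
  have hix := hopt.lt_of_fourCycle_left hA hB hx hii' hπi hπi' hv
  have hxi' := hopt.lt_of_fourCycle_right hA hB hx hii' hπi hπi' hv
  exact ⟨hix, hxi', hopt.apply_lt_of_fourCycle_left hA hB hx hix hxi' hπi hπi',
    hopt.apply_lt_of_fourCycle_right hA hB hx hix hxi' hπi hπi'⟩

end RecovAP

theorem recovAP_monge_antiMonge_two_cycles_nested_general (n k : ℕ) (hk : k ≤ n)
    (A B : Fin n → Fin n → ℝ)
    (hA : ∀ i k j l : Fin n, i < k → j < l → A i j + A k l ≤ A i l + A k j)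
    (hB : ∀ i k j l : Fin n, i < k → j < l → B i l + B k j ≤ B i j + B k l) :
    ∃ σ π : Equiv.Perm (Fin n),
      -- feasible
      (k ≤ (Finset.univ.filter fun i : Fin n => σ i = π i).card) ∧
      -- minimum cost among all feasible pairs
      (∀ σ' π' : Equiv.Perm (Fin n),
        k ≤ (Finset.univ.filter fun i : Fin n => σ' i = π' i).card →
        (∑ i, A i (σ i)) + (∑ i, B i (π i)) ≤ (∑ i, A i (σ' i)) + (∑ i, B i (π' i))) ∧
      -- only 2-cycles and 4-cycles: σ⁻¹ ∘ π is an involution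
      (σ⁻¹ * π) * (σ⁻¹ * π) = 1 ∧
      -- every 4-cycle is aligned
      (∀ i i' : Fin n, i < i' → (σ⁻¹ * π) i = i' → σ i < σ i') ∧
      -- every two distinct 4-cycles are nested
      (∀ i₁ i₁' i₂ i₂' : Fin n, i₁ < i₁' → i₂ < i₂' →
        (σ⁻¹ * π) i₁ = i₁' → (σ⁻¹ * π) i₂ = i₂' → i₁ ≠ i₂ →
        ((i₂ < i₁ ∧ i₁' < i₂' ∧ σ i₂ < σ i₁ ∧ σ i₁ < σ i₁' ∧ σ i₁' < σ i₂') ∨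
         (i₁ < i₂ ∧ i₂' < i₁' ∧ σ i₁ < σ i₂ ∧ σ i₂ < σ i₂' ∧ σ i₂' < σ i₁'))) ∧
      -- every 2-cycle is nested inside every 4-cycle
      (∀ x : Fin n, σ x = π x → ∀ i i' : Fin n, i < i' → (σ⁻¹ * π) i = i' →
        i < x ∧ x < i' ∧ σ i < σ x ∧ σ x < σ i') := by
  obtain ⟨σ, π, hopt⟩ := RecovAP.exists_isLexOptimal A B hk
  refine ⟨σ, π, hopt.1, fun σ' π' h => hopt.cost_le h, hopt.inv_mul_mul_self hA hB,
    fun i i' => hopt.apply_lt_apply_of_inv_mul_apply hA, ?_,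
    fun x hx i i' => hopt.agreement_nested hA hB hx⟩
  intro i₁ i₁' i₂ i₂' h₁ h₂ hτ₁ hτ₂ hne
  rcases hne.lt_or_gt with h | h
  · exact Or.inr ⟨h, hopt.fourCycles_nested_of_lt hA hB h₁ h₂ hτ₁ hτ₂ h⟩
  · exact Or.inl ⟨h, hopt.fourCycles_nested_of_lt hA hB h₂ h₁ hτ₂ hτ₁ h⟩

/-- **Lemma: 2-cycles nested inside 4-cycles.**
Let `A` be Monge, `B` Anti-Monge and `0 ≤ k ≤ n`.  Then there is an optimal solution `(σ, π)`
of RecovAP (feasible, with minimum cost among all feasible pairs) such that `τ = σ⁻¹ ∘ π` is an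
involution (only 2-cycles and 4-cycles), every 4-cycle is aligned, every two distinct 4-cycles
are nested, and every 2-cycle is nested inside every 4-cycle. -/
theorem recovAP_monge_antiMonge_two_cycles_nested (n k : ℕ) (hn : 1 ≤ n) (hk : k ≤ n)
    (A B : Fin n → Fin n → ℝ)
    (hA : ∀ i k j l : Fin n, i < k → j < l → A i j + A k l ≤ A i l + A k j)
    (hB : ∀ i k j l : Fin n, i < k → j < l → B i l + B k j ≤ B i j + B k l) :
    ∃ σ π : Equiv.Perm (Fin n),
      -- feasible
      (k ≤ (Finset.univ.filter fun i : Fin n => σ i = π i).card) ∧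
      -- minimum cost among all feasible pairs
      (∀ σ' π' : Equiv.Perm (Fin n),
        k ≤ (Finset.univ.filter fun i : Fin n => σ' i = π' i).card →
        (∑ i, A i (σ i)) + (∑ i, B i (π i)) ≤ (∑ i, A i (σ' i)) + (∑ i, B i (π' i))) ∧
      -- only 2-cycles and 4-cycles: σ⁻¹ ∘ π is an involution
      (σ⁻¹ * π) * (σ⁻¹ * π) = 1 ∧
      -- every 4-cycle is aligned
      (∀ i i' : Fin n, i < i' → (σ⁻¹ * π) i = i' → σ i < σ i') ∧
      -- every two distinct 4-cycles are nested
      (∀ i₁ i₁' i₂ i₂' : Fin n, i₁ < i₁' → i₂ < i₂' →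
        (σ⁻¹ * π) i₁ = i₁' → (σ⁻¹ * π) i₂ = i₂' → i₁ ≠ i₂ →
        ((i₂ < i₁ ∧ i₁' < i₂' ∧ σ i₂ < σ i₁ ∧ σ i₁ < σ i₁' ∧ σ i₁' < σ i₂') ∨
         (i₁ < i₂ ∧ i₂' < i₁' ∧ σ i₁ < σ i₂ ∧ σ i₂ < σ i₂' ∧ σ i₂' < σ i₁'))) ∧
      -- every 2-cycle is nested inside every 4-cycle
      (∀ x : Fin n, σ x = π x → ∀ i i' : Fin n, i < i' → (σ⁻¹ * π) i = i' →
        i < x ∧ x < i' ∧ σ i < σ x ∧ σ x < σ i') :=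
  recovAP_monge_antiMonge_two_cycles_nested_general n k hk A B hA hB
end

section
/- (Exact matching with a red matching reduces to 2S-RecovAP.) Let H be a bipartite graph with parts U and V, |U| = |V|, let R be a matching in H (not necessarily perfect), and let k ≥ 0. Let S_U ⊆ U and S_V ⊆ V be the sets of vertices not covered by R (so |S_U| = |S_V|), and fix a bijection φ : S_U → S_V. Define the graph H' by adding, for each v ∈ S_U ∪ S_V, a new vertex v' together with the edge {v, v'}, and adding, for each u ∈ S_U, the edge {u', (φ(u))'}. Then M_1 := R ∪ { {v, v'} : v ∈ S_U ∪ S_V } is a perfect matching of H'. Define c_2 on the edges of H' by c_2(e) = 1 for e ∈ R, c_2(e) = k + 1 for e = {v, v'} with v ∈ S_U ∪ S_V, and c_2(e) = 0 for all other edges. Then H has a perfect matching with exactly k edges in R if and only if H' has a perfect matching M_2 with |M_1 ∩ M_2| ≥ k and c_2(M_2) = k. -/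
open SimpleGraph
open scoped Classical

/-- The set of vertices not covered by the (red) edge set `R`. -/
def uncov {V : Type*} (R : Set (Sym2 V)) : Set V := {v | ∀ e ∈ R, v ∉ e}

/-- The vertex set of `H'`: the vertices of `H` together with one new vertex `v'` for every
vertex `v` not covered by `R`. -/
def PrimeVert {V : Type*} (R : Set (Sym2 V)) : Type _ := V ⊕ {v : V // v ∈ uncov R}

/-- Generating relation for the edges of `H'`: the edges of `H`, the pendant edges `{v, v'}`
for `v` not covered by `R`, and the edges `{u', (φ u)'}` for `u ∈ S_U` (i.e. `u` uncovered and
`u ∈ U`). -/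
def primeRel {V : Type*} (H : SimpleGraph V) (U : Finset V) (R : Set (Sym2 V)) (φ : V → V) :
    PrimeVert R → PrimeVert R → Prop
  | Sum.inl v, Sum.inl w => H.Adj v w
  | Sum.inl v, Sum.inr w => v = w.1
  | Sum.inr u, Sum.inr w => u.1 ∈ U ∧ φ u.1 = w.1
  | _, _ => False

/-- The graph `H'`. -/
def PrimeGraph {V : Type*} (H : SimpleGraph V) (U : Finset V) (R : Set (Sym2 V)) (φ : V → V) :
    SimpleGraph (PrimeVert R) :=
  SimpleGraph.fromRel (primeRel H U R φ)

/-- The edge set `M₁ = R ∪ { {v, v'} : v uncovered by R }`, a perfect matching of `H'`. -/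
def M1edges {V : Type*} (R : Set (Sym2 V)) : Set (Sym2 (PrimeVert R)) :=
  (Sym2.map Sum.inl '' R) ∪
    {s | ∃ v : {v : V // v ∈ uncov R}, s = s(Sum.inl v.1, Sum.inr v)}

/-- The second-stage cost function `c₂` on the edges of `H'`: cost `1` on the edges of `R`,
cost `k + 1` on the pendant edges `{v, v'}`, and cost `0` on all other edges. -/
noncomputable def c2 {V : Type*} (R : Set (Sym2 V)) (k : ℕ) : Sym2 (PrimeVert R) → ℝ :=
  fun s =>
    if s ∈ Sym2.map Sum.inl '' R then 1
    else if ∃ v : {v : V // v ∈ uncov R}, s = s(Sum.inl v.1, Sum.inr v) then (k : ℝ) + 1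
    else 0

/-!
Pendant edges `{v, v'}` cost `k + 1`, so a perfect matching `M₂` of `H'` of cost exactly `k`
contains none of them. Then every vertex of `H` is matched inside `H`, so `M₂` restricts to a
perfect matching of `H`, and the cost of `M₂` is its number of red edges, all of which lie in
`M₁ ∩ M₂`. Conversely, a perfect matching of `H` extends to `H'` at no extra cost by matching
each primed vertex `u'` with `(φ u)'`.
-/

theorem SimpleGraph.exists_isPerfectMatching_edgeSet_eq {W : Type*} {G : SimpleGraph W}
    {E : Set (Sym2 W)} (hE : E ⊆ G.edgeSet) (h : ∀ v, ∃! e, e ∈ E ∧ v ∈ e) :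
    ∃ M : G.Subgraph, M.edgeSet = E ∧ M.IsPerfectMatching := by
  have hle : fromEdgeSet E ≤ G := fun _ _ hvw => hE ((fromEdgeSet_adj E).mp hvw).1
  refine ⟨toSubgraph (fromEdgeSet E) hle, ?_, ?_⟩
  · ext e
    induction e using Sym2.ind with
    | _ a b =>
      simp only [Subgraph.mem_edgeSet, toSubgraph_adj, fromEdgeSet_adj, and_iff_left_iff_imp]
      exact fun hab => (hE hab).ne
  · rw [Subgraph.isPerfectMatching_iff]
    intro v
    obtain ⟨e, ⟨heE, hve⟩, huniq⟩ := h v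
    obtain ⟨w, rfl⟩ := Sym2.mem_iff_exists.mp hve
    refine ⟨w, (fromEdgeSet_adj E).mpr ⟨heE, (hE heE).ne⟩, fun w' hw' => ?_⟩
    exact Sym2.congr_right.mp (huniq _ ⟨((fromEdgeSet_adj E).mp hw').1, Sym2.mem_mk_left _ _⟩)

lemma ncard_image_map_inter_edgeSet {V W : Type*} {G : SimpleGraph V} {G' : SimpleGraph W}
    {f : V → W} (hf : Function.Injective f) {M : G.Subgraph} {M' : G'.Subgraph}
    (hMM : ∀ v w, M'.Adj (f v) (f w) ↔ M.Adj v w) (R : Set (Sym2 V)) :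
    (Sym2.map f '' R ∩ M'.edgeSet).ncard = (M.edgeSet ∩ R).ncard := by
  have himage : Sym2.map f '' R ∩ M'.edgeSet = Sym2.map f '' (M.edgeSet ∩ R) := by
    ext e
    constructor
    · rintro ⟨⟨r, hr, rfl⟩, he⟩
      induction r using Sym2.ind with
      | _ v w => exact ⟨s(v, w), ⟨(hMM v w).mp he, hr⟩, rfl⟩
    · rintro ⟨r, ⟨hrM, hr⟩, rfl⟩
      induction r using Sym2.ind with
      | _ v w => exact ⟨⟨_, hr, rfl⟩, (hMM v w).mpr hrM⟩
  rw [himage, Set.ncard_image_of_injective _ (Sym2.map.injective hf)]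

lemma Sym2.inl_mem_map_inl {α β : Type*} {a : α} {r : Sym2 α} :
    (Sum.inl a : α ⊕ β) ∈ Sym2.map Sum.inl r ↔ a ∈ r := by
  simp [Sym2.mem_map]

lemma Sym2.inr_notMem_map_inl {α β : Type*} {b : β} {r : Sym2 α} :
    (Sum.inr b : α ⊕ β) ∉ Sym2.map Sum.inl r := by
  simp [Sym2.mem_map]

lemma Sym2.inl_mem_mk_inl_inr {α β : Type*} {a a' : α} {b : β} :
    (Sum.inl a : α ⊕ β) ∈ s(Sum.inl a', Sum.inr b) ↔ a = a' := by
  simp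

lemma Sym2.inr_mem_mk_inl_inr {α β : Type*} {a : α} {b b' : β} :
    (Sum.inr b : α ⊕ β) ∈ s(Sum.inl a, Sum.inr b') ↔ b = b' := by
  simp

def redEdges {V : Type*} (R : Set (Sym2 V)) : Set (Sym2 (PrimeVert R)) :=
  Sym2.map Sum.inl '' R

def pendantEdges {V : Type*} (R : Set (Sym2 V)) : Set (Sym2 (PrimeVert R)) :=
  {s | ∃ v : {v : V // v ∈ uncov R}, s = s(Sum.inl v.1, Sum.inr v)}

instance {V : Type*} [Finite V] (R : Set (Sym2 V)) : Finite (PrimeVert R) :=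
  inferInstanceAs (Finite (V ⊕ _))

lemma existsUnique_mem_M1edges {V : Type*} {R : Set (Sym2 V)}
    (hmatch : ∀ e₁ ∈ R, ∀ e₂ ∈ R, e₁ ≠ e₂ → ∀ v : V, v ∈ e₁ → v ∉ e₂) (x : PrimeVert R) :
    ∃! e, e ∈ M1edges R ∧ x ∈ e := by
  rcases x with v | u
  · by_cases hv : v ∈ uncov R
    · refine ⟨s(Sum.inl v, Sum.inr ⟨v, hv⟩), ⟨Or.inr ⟨⟨v, hv⟩, rfl⟩, Sym2.mem_mk_left _ _⟩, ?_⟩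
      rintro _ ⟨⟨r, hr, rfl⟩ | ⟨u, rfl⟩, hve⟩
      · exact absurd (Sym2.inl_mem_map_inl.mp hve) (hv r hr)
      · obtain rfl : v = u := Sym2.inl_mem_mk_inl_inr.mp hve
        rfl
    · obtain ⟨r, hr, hvr⟩ : ∃ r ∈ R, v ∈ r := by simpa [uncov] using hv
      refine ⟨Sym2.map Sum.inl r, ⟨Or.inl ⟨r, hr, rfl⟩, Sym2.inl_mem_map_inl.mpr hvr⟩, ?_⟩
      rintro _ ⟨⟨r', hr', rfl⟩ | ⟨u, rfl⟩, hve⟩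
      · by_contra hne
        exact hmatch r' hr' r hr (fun h => hne (h ▸ rfl)) v (Sym2.inl_mem_map_inl.mp hve) hvr
      · obtain rfl : v = u := Sym2.inl_mem_mk_inl_inr.mp hve
        exact absurd u.2 hv
  · refine ⟨s(Sum.inl u.1, Sum.inr u), ⟨Or.inr ⟨u, rfl⟩, Sym2.mem_mk_right _ _⟩, ?_⟩
    rintro _ ⟨⟨r, -, rfl⟩ | ⟨u', rfl⟩, hue⟩
    · exact absurd hue Sym2.inr_notMem_map_inl
    · obtain rfl : u = u' := Sym2.inr_mem_mk_inl_inr.mp hue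
      rfl

section Cost

variable {V : Type*} {R : Set (Sym2 V)} {k : ℕ} {e : Sym2 (PrimeVert R)}

lemma disjoint_redEdges_pendantEdges : Disjoint (redEdges R) (pendantEdges R) := by
  rw [Set.disjoint_left]
  rintro _ ⟨r, -, rfl⟩ ⟨u, hu⟩
  exact Sym2.inr_notMem_map_inl (hu ▸ Sym2.mem_mk_right _ _ : Sum.inr u ∈ Sym2.map Sum.inl r)

lemma c2_of_mem_redEdges (he : e ∈ redEdges R) : c2 R k e = 1 :=
  if_pos he

lemma c2_of_mem_pendantEdges (he : e ∈ pendantEdges R) : c2 R k e = k + 1 :=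
  (if_neg (disjoint_redEdges_pendantEdges.notMem_of_mem_right he)).trans (if_pos he)

lemma c2_of_notMem (h₁ : e ∉ redEdges R) (h₂ : e ∉ pendantEdges R) : c2 R k e = 0 :=
  (if_neg h₁).trans (if_neg h₂)

lemma c2_nonneg (e : Sym2 (PrimeVert R)) : 0 ≤ c2 R k e := by
  unfold c2
  split_ifs <;> positivity

lemma finsum_c2_of_disjoint {E : Set (Sym2 (PrimeVert R))} (hE : E.Finite)
    (hd : Disjoint E (pendantEdges R)) :
    ∑ᶠ e ∈ E, c2 R k e = (redEdges R ∩ E).ncard := by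
  have hred : ∀ e ∈ E ∩ redEdges R, c2 R k e = 1 := fun e he => c2_of_mem_redEdges he.2
  have hrest : ∀ e ∈ E \ redEdges R, c2 R k e = 0 :=
    fun e he => c2_of_notMem he.2 (hd.notMem_of_mem_left he.1)
  rw [← finsum_mem_inter_add_sdiff _ hE, finsum_mem_congr rfl hred, finsum_mem_congr rfl hrest,
    finsum_mem_zero, add_zero, Set.inter_comm, ← finsum_one,
    Nat.cast_finsum_mem (hE.inter_of_right _), Nat.cast_one]

lemma finsum_c2_eq_iff {E : Set (Sym2 (PrimeVert R))} (hE : E.Finite) :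
    ∑ᶠ e ∈ E, c2 R k e = k ↔
      Disjoint E (pendantEdges R) ∧ (redEdges R ∩ E).ncard = k := by
  refine ⟨fun h => ?_, fun ⟨hd, hcard⟩ => by rw [finsum_c2_of_disjoint hE hd, hcard]⟩
  -- a single pendant edge already costs more than `k`
  have hd : Disjoint E (pendantEdges R) := by
    refine Set.disjoint_left.mpr fun e heE hep => ?_
    have hle : c2 R k e ≤ ∑ᶠ e ∈ E, c2 R k e := by
      rw [finsum_mem_eq_finite_toFinset_sum _ hE]
      exact Finset.single_le_sum (fun e _ => c2_nonneg e) (hE.mem_toFinset.mpr heE)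
    rw [c2_of_mem_pendantEdges hep, h] at hle
    linarith
  exact ⟨hd, by exact_mod_cast (finsum_c2_of_disjoint hE hd).symm.trans h⟩

end Cost

namespace PrimeGraph

variable {V : Type*} {H : SimpleGraph V} {U : Finset V} {R : Set (Sym2 V)} {φ : V → V}

lemma adj_inl_inl {v w : V} :
    (PrimeGraph H U R φ).Adj (Sum.inl v) (Sum.inl w) ↔ H.Adj v w := by
  refine (fromRel_adj _ _ _).trans ?_
  simpa [primeRel, PrimeVert, H.adj_comm w v] using Adj.ne

lemma adj_inl_inr {v : V} {u : {v : V // v ∈ uncov R}} :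
    (PrimeGraph H U R φ).Adj (Sum.inl v) (Sum.inr u) ↔ v = u.1 := by
  refine (fromRel_adj _ _ _).trans ?_
  simp [primeRel, PrimeVert]

lemma adj_inr_inr {u w : {v : V // v ∈ uncov R}} :
    (PrimeGraph H U R φ).Adj (Sum.inr u) (Sum.inr w) ↔
      u ≠ w ∧ ((u.1 ∈ U ∧ φ u.1 = w.1) ∨ (w.1 ∈ U ∧ φ w.1 = u.1)) := by
  refine (fromRel_adj _ _ _).trans ?_
  simp [primeRel, PrimeVert]

variable (H U R φ) in
def inlEmbedding : H ↪g PrimeGraph H U R φ := ⟨.inl, adj_inl_inl⟩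

lemma M1edges_subset_edgeSet (hR : R ⊆ H.edgeSet) :
    M1edges R ⊆ (PrimeGraph H U R φ).edgeSet := by
  rintro _ (⟨r, hr, rfl⟩ | ⟨u, rfl⟩)
  · exact (inlEmbedding H U R φ).map_mem_edgeSet_iff.mpr (hR hr)
  · exact adj_inl_inr.mpr rfl

lemma isPerfectMatching_comap_inl {M₂ : (PrimeGraph H U R φ).Subgraph}
    (hM₂ : M₂.IsPerfectMatching) (hd : Disjoint M₂.edgeSet (pendantEdges R)) :
    (M₂.comap (inlEmbedding H U R φ).toHom).IsPerfectMatching := by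
  rw [Subgraph.isPerfectMatching_iff] at hM₂ ⊢
  intro v
  obtain ⟨b, hb, huniq⟩ := hM₂ (Sum.inl v)
  rcases b with w | u
  · exact ⟨w, ⟨adj_inl_inl.mp (M₂.adj_sub hb), hb⟩,
      fun w' hw' => Sum.inl_injective (huniq _ hw'.2)⟩
  · obtain rfl : v = u.1 := adj_inl_inr.mp (M₂.adj_sub hb)
    exact absurd ⟨u, rfl⟩ (hd.notMem_of_mem_left hb)

lemma adj_comap_inl {M₂ : (PrimeGraph H U R φ).Subgraph} {v w : V} :
    M₂.Adj (Sum.inl v) (Sum.inl w) ↔ (M₂.comap (inlEmbedding H U R φ).toHom).Adj v w :=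
  ⟨fun h => ⟨adj_inl_inl.mp (M₂.adj_sub h), h⟩, And.right⟩

lemma existsUnique_adj_inr
    (hφmaps : ∀ u, u ∈ uncov R → u ∈ U → φ u ∈ uncov R ∧ φ u ∉ U)
    (hφinj : Set.InjOn φ (uncov R ∩ ↑U))
    (hφsurj : ∀ w, w ∈ uncov R → w ∉ U → ∃ u, u ∈ uncov R ∧ u ∈ U ∧ φ u = w)
    (u : {v : V // v ∈ uncov R}) :
    ∃! w, (PrimeGraph H U R φ).Adj (Sum.inr u) (Sum.inr w) := by
  simp only [adj_inr_inr]
  by_cases hu : u.1 ∈ U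
  · refine ⟨⟨φ u, (hφmaps u u.2 hu).1⟩, ⟨?_, .inl ⟨hu, rfl⟩⟩, ?_⟩
    · intro h
      have hφu : φ u = u := (congrArg Subtype.val h).symm
      exact (hφmaps u u.2 hu).2 (by rw [hφu]; exact hu)
    · rintro w ⟨-, ⟨-, hw⟩ | ⟨hwU, hw⟩⟩
      · exact Subtype.ext hw.symm
      · exact absurd (hw ▸ hu) (hφmaps w w.2 hwU).2
  · obtain ⟨x, hx, hxU, hxu⟩ := hφsurj u u.2 hu
    refine ⟨⟨x, hx⟩, ⟨?_, .inr ⟨hxU, hxu⟩⟩, ?_⟩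
    · intro h
      exact hu (congrArg Subtype.val h ▸ hxU)
    · rintro w ⟨-, ⟨hwU, -⟩ | ⟨hwU, hw⟩⟩
      · exact absurd hwU hu
      · exact Subtype.ext (hφinj ⟨w.2, hwU⟩ ⟨hx, hxU⟩ (hw.trans hxu.symm))

variable (U R φ) in
def extendMatching (M : H.Subgraph) : (PrimeGraph H U R φ).Subgraph :=
  M.map (inlEmbedding H U R φ).toHom ⊔
    (⊤ : (PrimeGraph H U R φ).Subgraph).induce (Set.range Sum.inr)

lemma extendMatching_adj_inl_inl {M : H.Subgraph} {v w : V} :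
    (extendMatching U R φ M).Adj (Sum.inl v) (Sum.inl w) ↔ M.Adj v w := by
  refine ⟨?_, fun h => .inl ⟨v, w, h, rfl, rfl⟩⟩
  rintro (⟨v', w', h, hv, hw⟩ | ⟨⟨u, hu⟩, -⟩)
  · obtain rfl := Sum.inl_injective hv
    obtain rfl := Sum.inl_injective hw
    exact h
  · exact (Sum.inr_ne_inl hu).elim

lemma disjoint_edgeSet_extendMatching_pendantEdges (M : H.Subgraph) :
    Disjoint (extendMatching U R φ M).edgeSet (pendantEdges R) := by
  refine Set.disjoint_right.mpr ?_
  rintro _ ⟨u, rfl⟩ h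
  rcases Subgraph.mem_edgeSet.mp h with ⟨_, _, _, _, hb⟩ | ⟨⟨u', hu'⟩, -⟩
  · exact Sum.inl_ne_inr hb
  · exact Sum.inr_ne_inl hu'

lemma isPerfectMatching_extendMatching {M : H.Subgraph} (hM : M.IsPerfectMatching)
    (hprimed : ∀ u, ∃! w, (PrimeGraph H U R φ).Adj (Sum.inr u) (Sum.inr w)) :
    (extendMatching U R φ M).IsPerfectMatching := by
  have hmatch : ((⊤ : (PrimeGraph H U R φ).Subgraph).induce (Set.range Sum.inr)).IsMatching := by
    rintro _ ⟨u, rfl⟩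
    obtain ⟨w, hw, huniq⟩ := hprimed u
    refine ⟨Sum.inr w, ⟨⟨u, rfl⟩, ⟨w, rfl⟩, hw⟩, ?_⟩
    rintro _ ⟨-, ⟨w', rfl⟩, hw'⟩
    rw [huniq w' hw']
  have hdisj : Disjoint (M.map (inlEmbedding H U R φ).toHom).support
      ((⊤ : (PrimeGraph H U R φ).Subgraph).induce (Set.range Sum.inr)).support := by
    refine Set.disjoint_left.mpr fun x hx hx' => ?_
    obtain ⟨v, -, rfl⟩ := Subgraph.support_subset_verts _ hx
    obtain ⟨u, hu⟩ := Subgraph.support_subset_verts _ hx'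
    exact Sum.inr_ne_inl hu
  refine ⟨(hM.1.map _ (inlEmbedding H U R φ).injective).sup hmatch hdisj, ?_⟩
  rintro (v | u)
  · exact .inl ⟨v, hM.2 v, rfl⟩
  · exact .inr ⟨u, rfl⟩

end PrimeGraph

theorem exact_matching_reduces_to_2S_RecovAP_general {V : Type*} [Fintype V]
    (H : SimpleGraph V) (U : Finset V)
    (R : Set (Sym2 V)) (hR : R ⊆ H.edgeSet)
    (hmatch : ∀ e₁ ∈ R, ∀ e₂ ∈ R, e₁ ≠ e₂ → ∀ v : V, v ∈ e₁ → v ∉ e₂)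
    (k : ℕ) (φ : V → V)
    (hφmaps : ∀ u, u ∈ uncov R → u ∈ U → φ u ∈ uncov R ∧ φ u ∉ U)
    (hφinj : Set.InjOn φ (uncov R ∩ ↑U))
    (hφsurj : ∀ w, w ∈ uncov R → w ∉ U → ∃ u, u ∈ uncov R ∧ u ∈ U ∧ φ u = w) :
    (∃ M₁ : (PrimeGraph H U R φ).Subgraph,
        M₁.edgeSet = M1edges R ∧ M₁.IsPerfectMatching) ∧
    ((∃ M : H.Subgraph, M.IsPerfectMatching ∧ (M.edgeSet ∩ R).ncard = k) ↔
      (∃ M₂ : (PrimeGraph H U R φ).Subgraph, M₂.IsPerfectMatching ∧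
        k ≤ (M1edges R ∩ M₂.edgeSet).ncard ∧
        ∑ᶠ e ∈ M₂.edgeSet, c2 R k e = (k : ℝ))) := by
  refine ⟨exists_isPerfectMatching_edgeSet_eq (PrimeGraph.M1edges_subset_edgeSet hR)
    (existsUnique_mem_M1edges hmatch), ⟨?_, ?_⟩⟩
  · rintro ⟨M, hM, rfl⟩
    set M₂ := PrimeGraph.extendMatching U R φ M
    have hM₂ : M₂.IsPerfectMatching := PrimeGraph.isPerfectMatching_extendMatching hM
      (PrimeGraph.existsUnique_adj_inr hφmaps hφinj hφsurj)
    have hcard : (redEdges R ∩ M₂.edgeSet).ncard = (M.edgeSet ∩ R).ncard :=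
      ncard_image_map_inter_edgeSet Sum.inl_injective
        (fun _ _ => PrimeGraph.extendMatching_adj_inl_inl) R
    have hcommon : (redEdges R ∩ M₂.edgeSet).ncard ≤ (M1edges R ∩ M₂.edgeSet).ncard :=
      Set.ncard_le_ncard (Set.inter_subset_inter_left _ Set.subset_union_left) (Set.toFinite _)
    refine ⟨M₂, hM₂, hcard ▸ hcommon, (finsum_c2_eq_iff (Set.toFinite _)).mpr
      ⟨PrimeGraph.disjoint_edgeSet_extendMatching_pendantEdges M, hcard⟩⟩
  · rintro ⟨M₂, hM₂, -, hcost⟩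
    obtain ⟨hd, hcard⟩ := (finsum_c2_eq_iff (Set.toFinite _)).mp hcost
    refine ⟨_, PrimeGraph.isPerfectMatching_comap_inl hM₂ hd, hcard ▸ ?_⟩
    exact (ncard_image_map_inter_edgeSet Sum.inl_injective
      (fun _ _ => PrimeGraph.adj_comap_inl) R).symm

/-- **Exact matching with a red matching reduces to 2S-RecovAP.**
Let `H` be a bipartite graph with parts `U` and `Uᶜ` of equal size, `R ⊆ E(H)` a matching,
`k ≥ 0`, and `φ` a bijection from the uncovered vertices of `U` onto the uncovered vertices of
`Uᶜ`.  Then `M₁ = R ∪ { {v, v'} }` is a perfect matching of `H'`, and `H` has a perfect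
matching with exactly `k` edges in `R` iff `H'` has a perfect matching `M₂` with
`|M₁ ∩ M₂| ≥ k` and `c₂(M₂) = k`. -/
theorem exact_matching_reduces_to_2S_RecovAP {V : Type*} [Fintype V] [DecidableEq V]
    (H : SimpleGraph V) (U : Finset V)
    (hbip : ∀ ⦃a b : V⦄, H.Adj a b → (a ∈ U ↔ b ∉ U))
    (hcard : 2 * U.card = Fintype.card V)
    (R : Set (Sym2 V)) (hR : R ⊆ H.edgeSet)
    (hmatch : ∀ e₁ ∈ R, ∀ e₂ ∈ R, e₁ ≠ e₂ → ∀ v : V, v ∈ e₁ → v ∉ e₂)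
    (k : ℕ) (φ : V → V)
    (hφmaps : ∀ u, u ∈ uncov R → u ∈ U → φ u ∈ uncov R ∧ φ u ∉ U)
    (hφinj : Set.InjOn φ (uncov R ∩ ↑U))
    (hφsurj : ∀ w, w ∈ uncov R → w ∉ U → ∃ u, u ∈ uncov R ∧ u ∈ U ∧ φ u = w) :
    (∃ M₁ : (PrimeGraph H U R φ).Subgraph,
        M₁.edgeSet = M1edges R ∧ M₁.IsPerfectMatching) ∧
    ((∃ M : H.Subgraph, M.IsPerfectMatching ∧ (M.edgeSet ∩ R).ncard = k) ↔
      (∃ M₂ : (PrimeGraph H U R φ).Subgraph, M₂.IsPerfectMatching ∧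
        k ≤ (M1edges R ∩ M₂.edgeSet).ncard ∧
        ∑ᶠ e ∈ M₂.edgeSet, c2 R k e = (k : ℝ))) :=
  exact_matching_reduces_to_2S_RecovAP_general H U R hR hmatch k φ hφmaps hφinj hφsurj
end
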